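/- The F-vector space V₂ of finite type invariants of degree ≤ 2 has dimension 6. -/

import Mathlib

/-- Letters are indexed by natural numbers; a signed letter carries a sign
(`true` = `+`, `false` = `−`). -/
abbrev Letter : Type := ℕ × Bool

/-- A signed word: every entry occurs exactly twice, and the two occurrences of
any letter carry the same sign. -/
def IsSignedWord (w : List Letter) : Prop :=
  ∀ p ∈ w, w.count p = 2 ∧ ∀ q ∈ w, q.1 = p.1 → q.2 = p.2

/-- Signed words (concrete representatives; isomorphism is subsumed by cyclic
equivalence below). -/
def SignedWord : Type := {w : List Letter // IsSignedWord w}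

/-- The set of letters occurring in a list of signed letters. -/
def lettersL (w : List Letter) : Finset ℕ := (w.map Prod.fst).toFinset

/-- The set of letters of a signed word. -/
def SignedWord.letters (w : SignedWord) : Finset ℕ := lettersL w.1

/-- The number of (distinct) letters of a signed word. -/
def SignedWord.numLetters (w : SignedWord) : ℕ := w.letters.card

theorem isSignedWord_filter (q : ℕ → Bool) {w : List Letter} (hw : IsSignedWord w) :
    IsSignedWord (w.filter fun p => q p.1) := by
  intro p hp
  rw [List.mem_filter] at hp
  refine ⟨?_, fun r hr => (hw p hp.1).2 r (List.mem_filter.mp hr).1⟩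
  rw [List.count_filter (p := fun r : Letter => q r.1) hp.2]
  exact (hw p hp.1).1

/-- Delete both occurrences of every letter of `T` from `w`. -/
def SignedWord.delete (w : SignedWord) (T : Finset ℕ) : SignedWord :=
  ⟨w.1.filter fun p => decide (p.1 ∉ T), isSignedWord_filter (fun a => decide (a ∉ T)) w.2⟩

/-- The induced signed subword of `w` on a set `U` of letters. -/
def SignedWord.restrict (w : SignedWord) (U : Finset ℕ) : SignedWord :=
  ⟨w.1.filter fun p => decide (p.1 ∈ U), isSignedWord_filter (fun a => decide (a ∈ U)) w.2⟩

/-- Sign-preserving relabeling of letters. -/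
def Iso (w w' : List Letter) : Prop :=
  ∃ f : ℕ ≃ ℕ, w' = w.map fun p => (f p.1, p.2)

/-- The basic move `A^ε x A^ε y ↦ x A^(−ε) y A^(−ε)`. -/
def Move (w w' : List Letter) : Prop :=
  ∃ (a : ℕ) (s : Bool) (x y : List Letter),
    w = (a, s) :: (x ++ (a, s) :: y) ∧ w' = x ++ (a, !s) :: (y ++ [(a, !s)])

/-- Cyclic equivalence of signed words: the equivalence relation generated by
isomorphism together with the basic move. -/
def CyclicEquivL : List Letter → List Letter → Prop :=
  Relation.EqvGen fun w w' => Iso w w' ∨ Move w w'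

/-- Cyclic equivalence of signed words. -/
def SignedWord.CyclicEquiv (w w' : SignedWord) : Prop := CyclicEquivL w.1 w'.1

/-- A cyclic equivalence invariant with values in `F`. -/
def WordInvariant (F : Type*) [Field F] (v : SignedWord → F) : Prop :=
  ∀ w w' : SignedWord, w.CyclicEquiv w' → v w = v w'

/-- The prolongation of `v` to the singular signed word `(w, S)` (the letters of
`S` being declared singular), given by inclusion–exclusion. -/
def prolong (F : Type*) [Field F] (v : SignedWord → F) (w : SignedWord) (S : Finset ℕ) : F :=
  ∑ T ∈ S.powerset, (-1 : F) ^ T.card * v (w.delete T)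

/-- `v` is a finite type invariant of degree ≤ `n`: it is a cyclic equivalence
invariant whose prolongation vanishes on every singular signed word with more
than `n` singular letters. -/
def FiniteTypeLe (F : Type*) [Field F] (n : ℕ) (v : SignedWord → F) : Prop :=
  WordInvariant F v ∧
    ∀ (w : SignedWord) (S : Finset ℕ), S ⊆ w.letters → n < S.card →
      prolong F v w S = 0

/-- The empty signed word `φ`. -/
def wordEmpty : SignedWord := ⟨[], by intro p hp; simp at hp⟩

/-- The one-letter positive signed word `AA`. -/
def wordAA : SignedWord := ⟨[(0, true), (0, true)], by unfold IsSignedWord; decide⟩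

/-- The one-letter negative signed word `ĀĀ`. -/
def wordAAneg : SignedWord := ⟨[(0, false), (0, false)], by unfold IsSignedWord; decide⟩

/-- The two-letter signed word `AABB`. -/
def wordAABB : SignedWord := ⟨[(0, true), (0, true), (1, true), (1, true)], by unfold IsSignedWord; decide⟩

/-- The two-letter signed word `AAB̄B̄`. -/
def wordAABnBn : SignedWord := ⟨[(0, true), (0, true), (1, false), (1, false)], by unfold IsSignedWord; decide⟩

/-- The two-letter signed word `AB̄B̄A`. -/
def wordABnBnA : SignedWord := ⟨[(0, true), (1, false), (1, false), (0, true)], by unfold IsSignedWord; decide⟩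

/-- The two-letter signed word `ABAB`. -/
def wordABAB : SignedWord := ⟨[(0, true), (1, true), (0, true), (1, true)], by unfold IsSignedWord; decide⟩

/-- The underlying list of the word `A₁A₁A₂A₂…AₙAₙ` (all letters positive). -/
def wListN (n : ℕ) : List Letter := (List.range n).flatMap fun i => [(i, true), (i, true)]

/-- `Ncount u w`: the number of `k`-element subsets of the letters of `w`
(`k` = number of letters of `u`) whose induced signed subword is cyclically
equivalent to (an isomorphic copy of) `u`. -/
noncomputable def Ncount (u w : SignedWord) : ℕ := by
  classical
  exact (w.letters.powerset.filter fun U =>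
    U.card = u.numLetters ∧ (w.restrict U).CyclicEquiv u).card

theorem prolong_add (F : Type*) [Field F] (v₁ v₂ : SignedWord → F) (w : SignedWord) (S : Finset ℕ) :
    prolong F (v₁ + v₂) w S = prolong F v₁ w S + prolong F v₂ w S := by
  simp [prolong, ← Finset.sum_add_distrib, mul_add]

theorem prolong_smul (F : Type*) [Field F] (c : F) (v : SignedWord → F) (w : SignedWord) (S : Finset ℕ) :
    prolong F (c • v) w S = c * prolong F v w S := by
  rw [prolong, prolong, Finset.mul_sum]
  exact Finset.sum_congr rfl fun T _ => by simp [mul_left_comm]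

/-- The `F`-vector space `Vₙ` of finite type invariants of degree ≤ `n`. -/
def Vn (F : Type*) [Field F] (n : ℕ) : Submodule F (SignedWord → F) where
  carrier := {v | FiniteTypeLe F n v}
  add_mem' := by
    rintro v₁ v₂ ⟨h1, h1'⟩ ⟨h2, h2'⟩
    refine ⟨fun w w' h => by simp [h1 w w' h, h2 w w' h], fun w S hS hc => ?_⟩
    rw [prolong_add, h1' w S hS hc, h2' w S hS hc, add_zero]
  zero_mem' := ⟨fun _ _ _ => rfl, fun w S hS hc => by simp [prolong]⟩
  smul_mem' := by
    rintro c v ⟨h, h'⟩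
    refine ⟨fun w w' hww => by simp [h w w' hww], fun w S hS hc => ?_⟩
    rw [prolong_smul, h' w S hS hc, mul_zero]

/-- Cyclic equivalence as a setoid on signed words. -/
def cycSetoid : Setoid SignedWord :=
  ⟨SignedWord.CyclicEquiv, fun w => Relation.EqvGen.refl w.1,
    fun h => Relation.EqvGen.symm _ _ h, fun h h' => Relation.EqvGen.trans _ _ _ h h'⟩


/-!
For a signed word `u`, the function `w ↦ Ncount u w` is a cyclic equivalence invariant, and by
inclusion–exclusion its prolongation to `(w, S)` counts the sub-words of type `u` whose letters
contain `S`; hence it has degree `≤ numLetters u`. Conversely, an invariant of degree `≤ n` is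
determined by its values on words with at most `n` letters, because `ṽ(w, letters w) = 0` expresses
`v w` through words with fewer letters. Up to cyclic equivalence there are exactly six signed words
with at most two letters, `φ, AA, AABB, AAB̄B̄, AB̄B̄A, ABAB`, and the matrix of the six invariants
`Ncount uᵢ` evaluated at these words is unitriangular. So evaluation at them is injective on `V₂`,
and the six `Ncount uᵢ` are linearly independent in `V₂`.
-/

open Finset

theorem Relation.EqvGen.apply_eq_of_invariant {α β : Type*} {r : α → α → Prop} {P : α → Prop}
    {f : α → β} (hP : ∀ a b, r a b → (P a ↔ P b)) (hf : ∀ a b, r a b → P a → f a = f b)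
    {a b : α} (h : Relation.EqvGen r a b) (ha : P a) : f a = f b := by
  suffices (P a ↔ P b) ∧ (P a → f a = f b) from this.2 ha
  clear ha
  induction h with
  | rel a b hab => exact ⟨hP a b hab, hf a b hab⟩
  | refl => exact ⟨Iff.rfl, fun _ => rfl⟩
  | symm a b _ ih => exact ⟨ih.1.symm, fun hb => (ih.2 (ih.1.2 hb)).symm⟩
  | trans a b c _ _ ih₁ ih₂ =>
    exact ⟨ih₁.1.trans ih₂.1, fun ha => (ih₁.2 ha).trans (ih₂.2 (ih₁.1.1 ha))⟩

namespace CyclicEquivL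

variable {l l' l'' : List Letter}

theorem refl (l : List Letter) : CyclicEquivL l l := Relation.EqvGen.refl l

theorem symm (h : CyclicEquivL l l') : CyclicEquivL l' l := Relation.EqvGen.symm _ _ h

theorem trans (h : CyclicEquivL l l') (h' : CyclicEquivL l' l'') : CyclicEquivL l l'' :=
  Relation.EqvGen.trans _ _ _ h h'

theorem move (a : ℕ) (s : Bool) (x y : List Letter) :
    CyclicEquivL ((a, s) :: (x ++ (a, s) :: y)) (x ++ (a, !s) :: (y ++ [(a, !s)])) :=
  Relation.EqvGen.rel _ _ (Or.inr ⟨a, s, x, y, rfl, rfl⟩)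

theorem relabel (f : ℕ ≃ ℕ) (l : List Letter) :
    CyclicEquivL l (l.map fun p => (f p.1, p.2)) :=
  Relation.EqvGen.rel _ _ (Or.inl ⟨f, rfl⟩)

end CyclicEquivL

theorem List.append_eq_pair {α : Type*} {x y : List α} {p : α} (h : x ++ y = [p, p]) :
    (x = [] ∧ y = [p, p]) ∨ (x = [p] ∧ y = [p]) ∨ (x = [p, p] ∧ y = []) := by
  rcases x with _ | ⟨q, _ | ⟨r, _ | ⟨_, _⟩⟩⟩ <;> simp_all

theorem mem_lettersL {l : List Letter} {a : ℕ} : a ∈ lettersL l ↔ ∃ p ∈ l, p.1 = a := by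
  simp [lettersL]

theorem lettersL_perm {l l' : List Letter} (h : l.Perm l') : lettersL l = lettersL l' :=
  List.toFinset_eq_of_perm _ _ (h.map _)

theorem lettersL_cons_cons (a : ℕ) (s : Bool) (z : List Letter) :
    lettersL ((a, s) :: (a, s) :: z) = insert a (lettersL z) := by
  simp [lettersL]

theorem perm_cons_append_cons (p : Letter) (x y : List Letter) :
    (p :: (x ++ p :: y)).Perm (p :: p :: (x ++ y)) :=
  List.perm_middle.cons p

theorem perm_append_cons_append (p : Letter) (x y : List Letter) :
    (x ++ p :: (y ++ [p])).Perm (p :: p :: (x ++ y)) := by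
  refine List.perm_middle.trans (List.Perm.cons p ?_)
  rw [← List.append_assoc]
  exact List.perm_append_singleton _ _

theorem lettersL_move {l l' : List Letter} (h : Move l l') : lettersL l = lettersL l' := by
  obtain ⟨a, s, x, y, rfl, rfl⟩ := h
  rw [lettersL_perm (perm_cons_append_cons _ x y), lettersL_perm (perm_append_cons_append _ x y),
    lettersL_cons_cons, lettersL_cons_cons]

theorem length_eq_of_move {l l' : List Letter} (h : Move l l') : l.length = l'.length := by
  obtain ⟨a, s, x, y, rfl, rfl⟩ := h
  simp only [List.length_cons, List.length_append, List.length_nil]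
  omega

theorem IsSignedWord.perm {l l' : List Letter} (h : l.Perm l') (hl : IsSignedWord l) :
    IsSignedWord l' := fun p hp =>
  ⟨h.count_eq p ▸ (hl p (h.mem_iff.2 hp)).1,
    fun q hq => (hl p (h.mem_iff.2 hp)).2 q (h.mem_iff.2 hq)⟩

theorem isSignedWord_cons_cons_iff {a : ℕ} {s : Bool} {z : List Letter} :
    IsSignedWord ((a, s) :: (a, s) :: z) ↔ (∀ p ∈ z, p.1 ≠ a) ∧ IsSignedWord z := by
  constructor
  · intro h
    have hz : ∀ p ∈ z, p.1 ≠ a := by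
      intro p hp hpa
      have hps : p = (a, s) := Prod.ext hpa ((h (a, s) (by simp)).2 p (by simp [hp]) hpa)
      have := (h (a, s) (by simp)).1
      simp only [List.count_cons_self] at this
      exact (List.count_pos_iff.2 (hps ▸ hp)).ne' (by omega)
    refine ⟨hz, fun p hp => ⟨?_, fun q hq => (h p (by simp [hp])).2 q (by simp [hq])⟩⟩
    have hne : (a, s) ≠ p := fun he => hz p hp (by rw [← he])
    simpa [List.count_cons, hne] using (h p (by simp [hp])).1
  · rintro ⟨hz, h⟩ p hp
    have hA : (a, s) ∉ z := fun hA => hz _ hA rfl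
    have hmem : ∀ q ∈ (a, s) :: (a, s) :: z, q = (a, s) ∨ q ∈ z := by simp
    rcases hmem p hp with rfl | hp
    · refine ⟨by simp [List.count_eq_zero.2 hA], fun q hq hqa => ?_⟩
      rw [(hmem q hq).resolve_right fun hq => hz q hq hqa]
    have hne : (a, s) ≠ p := fun he => hz p hp (by rw [← he])
    refine ⟨by simpa [List.count_cons, hne] using (h p hp).1, fun q hq hqp => ?_⟩
    rcases hmem q hq with rfl | hq
    · exact absurd hqp.symm (hz p hp)
    · exact (h p hp).2 q hq hqp

theorem IsSignedWord.relabel (f : ℕ ≃ ℕ) {l : List Letter} (h : IsSignedWord l) :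
    IsSignedWord (l.map fun p => (f p.1, p.2)) := by
  have hf : Function.Injective fun p : Letter => (f p.1, p.2) :=
    fun p q hpq => Prod.ext (f.injective (Prod.ext_iff.1 hpq).1) (Prod.ext_iff.1 hpq).2
  simp only [IsSignedWord, List.mem_map, forall_exists_index, and_imp, forall_apply_eq_imp_iff₂,
    List.count_map_of_injective _ _ hf, EmbeddingLike.apply_eq_iff_eq]
  exact h

theorem isSignedWord_relabel_iff (f : ℕ ≃ ℕ) {l : List Letter} :
    IsSignedWord (l.map fun p => (f p.1, p.2)) ↔ IsSignedWord l := by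
  refine ⟨fun h => ?_, IsSignedWord.relabel f⟩
  simpa [List.map_map, Function.comp_def] using h.relabel f.symm

theorem isSignedWord_cons_append_cons_iff {a : ℕ} {s : Bool} {x y : List Letter} :
    IsSignedWord ((a, s) :: (x ++ (a, s) :: y)) ↔ (∀ p ∈ x ++ y, p.1 ≠ a) ∧ IsSignedWord (x ++ y) :=
  ⟨fun h => isSignedWord_cons_cons_iff.1 (h.perm (perm_cons_append_cons _ x y)),
    fun h => (isSignedWord_cons_cons_iff.2 h).perm (perm_cons_append_cons _ x y).symm⟩

theorem isSignedWord_append_cons_append_iff {a : ℕ} {s : Bool} {x y : List Letter} :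
    IsSignedWord (x ++ (a, s) :: (y ++ [(a, s)])) ↔
      (∀ p ∈ x ++ y, p.1 ≠ a) ∧ IsSignedWord (x ++ y) :=
  ⟨fun h => isSignedWord_cons_cons_iff.1 (h.perm (perm_append_cons_append _ x y)),
    fun h => (isSignedWord_cons_cons_iff.2 h).perm (perm_append_cons_append _ x y).symm⟩

theorem isSignedWord_iff_of_move {l l' : List Letter} (h : Move l l') :
    IsSignedWord l ↔ IsSignedWord l' := by
  obtain ⟨a, s, x, y, rfl, rfl⟩ := h
  rw [isSignedWord_cons_append_cons_iff, isSignedWord_append_cons_append_iff]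

theorem IsSignedWord.exists_eq_cons_append_cons {l : List Letter} (h : IsSignedWord l)
    (hl : l ≠ []) :
    ∃ a s x y, l = (a, s) :: (x ++ (a, s) :: y) := by
  obtain ⟨⟨a, s⟩, r, rfl⟩ := List.exists_cons_of_ne_nil hl
  have hr : (a, s) ∈ r := by
    have := (h (a, s) (by simp)).1
    simp only [List.count_cons_self] at this
    exact List.count_pos_iff.1 (by omega)
  obtain ⟨x, y, rfl⟩ := List.append_of_mem hr
  exact ⟨a, s, x, y, rfl⟩

theorem IsSignedWord.length_eq {l : List Letter} (h : IsSignedWord l) :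
    l.length = 2 * (lettersL l).card := by
  rcases eq_or_ne l [] with rfl | hl
  · rfl
  obtain ⟨a, s, x, y, rfl⟩ := h.exists_eq_cons_append_cons hl
  obtain ⟨hxy, h'⟩ := isSignedWord_cons_append_cons_iff.1 h
  have ha : a ∉ lettersL (x ++ y) := fun ha => by
    obtain ⟨p, hp, rfl⟩ := mem_lettersL.1 ha
    exact hxy p hp rfl
  have := h'.length_eq
  rw [lettersL_perm (perm_cons_append_cons _ x y), lettersL_cons_cons, card_insert_of_notMem ha]
  simp only [List.length_cons, List.length_append] at this ⊢
  omega
termination_by l.length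
decreasing_by simp_all

theorem IsSignedWord.exists_eq_pair {z : List Letter} (h : IsSignedWord z) (hz : z.length = 2) :
    ∃ p, z = [p, p] := by
  obtain ⟨p, q, rfl⟩ : ∃ p q, z = [p, q] := by
    match z, hz with
    | [p, q], _ => exact ⟨p, q, rfl⟩
  have := (h p (by simp)).1
  by_cases hqp : q = p
  · exact ⟨p, by rw [hqp]⟩
  · simp [hqp] at this

theorem IsSignedWord.exists_append_eq_pair {a : ℕ} {s : Bool} {x y : List Letter}
    (h : IsSignedWord ((a, s) :: (x ++ (a, s) :: y))) (hl : x.length + y.length = 2) :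
    ∃ b t, b ≠ a ∧ x ++ y = [(b, t), (b, t)] := by
  obtain ⟨hxy, h'⟩ := isSignedWord_cons_append_cons_iff.1 h
  obtain ⟨⟨b, t⟩, hp⟩ := h'.exists_eq_pair (by simpa using hl)
  exact ⟨b, t, hxy (b, t) (by simp [hp]), hp⟩

open Classical in
/-- `Ncount` on underlying lists: a chain witnessing `CyclicEquivL` may pass through lists that
are not signed words. -/
noncomputable def NcountL (u : SignedWord) (l : List Letter) : ℕ :=
  ((lettersL l).powerset.filter fun U =>
    U.card = u.numLetters ∧ CyclicEquivL (l.filter fun p => decide (p.1 ∈ U)) u.1).card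

theorem Ncount_eq_NcountL (u w : SignedWord) : Ncount u w = NcountL u w.1 := rfl

theorem cyclicEquivL_filter_of_move {l l' : List Letter} (h : Move l l') (U : Finset ℕ) :
    CyclicEquivL (l.filter fun p => decide (p.1 ∈ U)) (l'.filter fun p => decide (p.1 ∈ U)) := by
  obtain ⟨a, s, x, y, rfl, rfl⟩ := h
  by_cases ha : a ∈ U
  · simpa [List.filter_append, ha] using CyclicEquivL.move a s _ _
  · simpa [List.filter_append, ha] using CyclicEquivL.refl _

theorem NcountL_move {l l' : List Letter} (h : Move l l') (u : SignedWord) :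
    NcountL u l = NcountL u l' := by
  classical
  unfold NcountL
  rw [lettersL_move h]
  refine congrArg card (filter_congr fun U _ => and_congr_right fun _ => ?_)
  have := cyclicEquivL_filter_of_move h U
  exact ⟨this.symm.trans, this.trans⟩

theorem lettersL_relabel (f : ℕ ≃ ℕ) (l : List Letter) :
    lettersL (l.map fun p => (f p.1, p.2)) = (lettersL l).image f := by
  ext b
  simp [lettersL]

theorem filter_relabel (f : ℕ ≃ ℕ) (l : List Letter) (U : Finset ℕ) :
    (l.map fun p => (f p.1, p.2)).filter (fun p => decide (p.1 ∈ U.image f)) =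
      (l.filter fun p => decide (p.1 ∈ U)).map fun p => (f p.1, p.2) := by
  simp [List.filter_map, Function.comp_def]

theorem NcountL_relabel (f : ℕ ≃ ℕ) (l : List Letter) (u : SignedWord) :
    NcountL u (l.map fun p => (f p.1, p.2)) = NcountL u l := by
  classical
  unfold NcountL
  rw [lettersL_relabel, powerset_image, filter_image,
    card_image_of_injective _ (image_injective f.injective)]
  refine congrArg card (filter_congr fun U _ => ?_)
  rw [card_image_of_injective _ f.injective, filter_relabel]
  have := CyclicEquivL.relabel f (l.filter fun p => decide (p.1 ∈ U))
  exact and_congr_right fun _ => ⟨this.trans, this.symm.trans⟩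

theorem Ncount_wordInvariant (F : Type*) [Field F] (u : SignedWord) :
    WordInvariant F fun w => (Ncount u w : F) := by
  intro w w' h
  have : NcountL u w.1 = NcountL u w'.1 := by
    refine congrArg (Quot.lift (NcountL u) ?_) (Quot.eqvGen_sound h)
    rintro l l' (⟨f, rfl⟩ | hm)
    · exact (NcountL_relabel f l u).symm
    · exact NcountL_move hm u
  simp only [Ncount_eq_NcountL, this]

namespace SignedWord

theorem letters_delete (w : SignedWord) (T : Finset ℕ) : (w.delete T).letters = w.letters \ T := by
  ext a
  simp only [letters, delete, mem_lettersL, mem_sdiff, List.mem_filter, decide_eq_true_eq]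
  constructor
  · rintro ⟨p, ⟨hp, hpT⟩, rfl⟩
    exact ⟨⟨p, hp, rfl⟩, hpT⟩
  · rintro ⟨⟨p, hp, rfl⟩, hpT⟩
    exact ⟨p, ⟨hp, hpT⟩, rfl⟩

theorem delete_empty (w : SignedWord) : w.delete ∅ = w :=
  Subtype.ext (List.filter_eq_self.2 fun p _ => by simp)

theorem restrict_delete {U T : Finset ℕ} (h : Disjoint U T) (w : SignedWord) :
    (w.delete T).restrict U = w.restrict U := by
  refine Subtype.ext ((List.filter_filter ..).trans (List.filter_congr fun p _ => ?_))
  by_cases hp : p.1 ∈ U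
  · simp [hp, disjoint_left.1 h hp]
  · simp [hp]

theorem restrict_letters (w : SignedWord) : w.restrict w.letters = w :=
  Subtype.ext (List.filter_eq_self.2 fun p hp => decide_eq_true (mem_lettersL.2 ⟨p, hp, rfl⟩))

end SignedWord

open Classical in
theorem Ncount_delete (u w : SignedWord) (T : Finset ℕ) :
    Ncount u (w.delete T) = #{U ∈ w.letters.powerset |
      (U.card = u.numLetters ∧ (w.restrict U).CyclicEquiv u) ∧ Disjoint U T} := by
  unfold Ncount
  rw [SignedWord.letters_delete]
  refine card_bij (fun U _ => U) ?_ (fun _ _ _ _ h => h) ?_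
  · intro U hU
    simp only [mem_filter, mem_powerset, subset_sdiff] at hU ⊢
    exact ⟨hU.1.1, ⟨hU.2.1, SignedWord.restrict_delete hU.1.2 w ▸ hU.2.2⟩, hU.1.2⟩
  · intro U hU
    simp only [mem_filter, mem_powerset, subset_sdiff] at hU ⊢
    refine ⟨U, ⟨⟨hU.1, hU.2.2⟩, hU.2.1.1, ?_⟩, rfl⟩
    exact (SignedWord.restrict_delete hU.2.2 w).symm ▸ hU.2.1.2

theorem sum_powerset_filter_disjoint_neg_one_pow {α R : Type*} [DecidableEq α] [Ring R]
    (S U : Finset α) :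
    ∑ T ∈ S.powerset with Disjoint U T, (-1 : R) ^ T.card = if S ⊆ U then 1 else 0 := by
  have : {T ∈ S.powerset | Disjoint U T} = (S \ U).powerset := by
    ext T
    simp [subset_sdiff, disjoint_comm]
  have h := congrArg (Int.cast : ℤ → R) (sum_powerset_neg_one_pow_card (x := S \ U))
  push_cast [apply_ite (Int.cast : ℤ → R), sdiff_eq_empty_iff_subset] at h
  rw [this, h]

open Classical in
theorem prolong_Ncount (F : Type*) [Field F] (u w : SignedWord) (S : Finset ℕ) :
    prolong F (fun w => (Ncount u w : F)) w S = #{U ∈ w.letters.powerset |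
      (U.card = u.numLetters ∧ (w.restrict U).CyclicEquiv u) ∧ S ⊆ U} := by
  simp only [prolong, Ncount_delete, card_filter, Nat.cast_sum, mul_sum]
  rw [sum_comm]
  refine sum_congr rfl fun U _ => ?_
  by_cases hU : U.card = u.numLetters ∧ (w.restrict U).CyclicEquiv u
  · simp only [hU, true_and, Nat.cast_ite, Nat.cast_one, Nat.cast_zero, mul_ite, mul_one,
      mul_zero, ← sum_filter]
    exact sum_powerset_filter_disjoint_neg_one_pow S U
  · simp [hU]

theorem Ncount_mem_Vn (F : Type*) [Field F] {n : ℕ} {u : SignedWord} (hu : u.numLetters ≤ n) :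
    (fun w => (Ncount u w : F)) ∈ Vn F n := by
  refine ⟨Ncount_wordInvariant F u, fun w S _ hS => ?_⟩
  classical
  rw [prolong_Ncount, filter_eq_empty_iff.2, card_empty, Nat.cast_zero]
  rintro U - ⟨⟨hUu, -⟩, hSU⟩
  have := card_le_card hSU
  omega

theorem Ncount_eq_zero_of_numLetters_lt {u w : SignedWord} (h : w.numLetters < u.numLetters) :
    Ncount u w = 0 := by
  classical
  refine card_eq_zero.2 (filter_eq_empty_iff.2 fun U hU ⟨hUu, _⟩ => ?_)
  have : U.card ≤ w.numLetters := card_le_card (mem_powerset.1 hU)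
  omega

open Classical in
theorem Ncount_of_numLetters_eq {u w : SignedWord} (h : w.numLetters = u.numLetters) :
    Ncount u w = if w.CyclicEquiv u then 1 else 0 := by
  have hU : ∀ U ∈ w.letters.powerset, U.card = u.numLetters ↔ U = w.letters := fun U hU =>
    ⟨fun hc => eq_of_subset_of_card_le (mem_powerset.1 hU) (hc ▸ h.le), fun he => he ▸ h⟩
  unfold Ncount
  rw [filter_congr fun U hU' => by rw [hU U hU']]
  split_ifs with he
  · refine card_eq_one.2 ⟨w.letters, eq_singleton_iff_unique_mem.2 ⟨?_, fun U hU' => ?_⟩⟩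
    · simpa [SignedWord.restrict_letters] using he
    · exact (mem_filter.1 hU').2.1
  · refine card_eq_zero.2 (filter_eq_empty_iff.2 fun U _ ⟨hUw, hUu⟩ => ?_)
    exact he (by rwa [hUw, SignedWord.restrict_letters] at hUu)

theorem Ncount_self (u : SignedWord) : Ncount u u = 1 := by
  rw [Ncount_of_numLetters_eq rfl]
  exact if_pos (CyclicEquivL.refl u.1)

theorem eq_zero_of_forall_numLetters_le {F : Type*} [Field F] {n : ℕ} {v : SignedWord → F}
    (hv : FiniteTypeLe F n v) (h : ∀ w : SignedWord, w.numLetters ≤ n → v w = 0)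
    (w : SignedWord) : v w = 0 := by
  rcases le_or_gt w.numLetters n with hwn | hnw
  · exact h w hwn
  have hp := hv.2 w w.letters subset_rfl hnw
  rw [prolong, sum_eq_single_of_mem ∅ (empty_mem_powerset _)] at hp
  · simpa [SignedWord.delete_empty] using hp
  intro T hT hTne
  have : (w.delete T).numLetters < w.numLetters :=
    card_lt_card (SignedWord.letters_delete w T ▸
      sdiff_ssubset (mem_powerset.1 hT) (nonempty_iff_ne_empty.2 hTne))
  rw [eq_zero_of_forall_numLetters_le hv h (w.delete T), mul_zero]
termination_by w.numLetters

def patternAABB (a b : ℕ) (s t : Bool) : List Letter := [(a, s), (a, s), (b, t), (b, t)]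

def patternABAB (a b : ℕ) (s t : Bool) : List Letter := [(a, s), (b, t), (a, s), (b, t)]

def patternABBA (a b : ℕ) (s t : Bool) : List Letter := [(a, s), (b, t), (b, t), (a, s)]

theorem IsSignedWord.eq_pattern {l : List Letter} (h : IsSignedWord l) (hl : l.length = 4) :
    ∃ a b s t, b ≠ a ∧
      (l = patternAABB a b s t ∨ l = patternABAB a b s t ∨ l = patternABBA a b s t) := by
  obtain ⟨a, s, x, y, rfl⟩ := h.exists_eq_cons_append_cons (List.ne_nil_of_length_pos (by omega))
  obtain ⟨b, t, hba, hxy⟩ := h.exists_append_eq_pair (by simp at hl; omega)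
  refine ⟨a, b, s, t, hba, ?_⟩
  rcases List.append_eq_pair hxy with ⟨rfl, rfl⟩ | ⟨rfl, rfl⟩ | ⟨rfl, rfl⟩
  exacts [Or.inl rfl, Or.inr (Or.inl rfl), Or.inr (Or.inr rfl)]

/-- A move on a letter flips its sign and exchanges the arcs inside and outside its two
occurrences. Hence interlacing (value `5`) is preserved, and so is, for a non-interlaced letter,
its sign xor whether the other letter lies inside it; on non-interlaced words the value counts
the letters where this is `true`. -/
def twoLetterInv : List Letter → ℕ
  | [p, q, r, _] =>
    if p.1 = r.1 then 5 else if p.1 = q.1 then p.2.toNat + r.2.toNat else (!p.2).toNat + q.2.toNat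
  | _ => 0

theorem twoLetterInv_relabel (f : ℕ ≃ ℕ) (l : List Letter) :
    twoLetterInv (l.map fun p => (f p.1, p.2)) = twoLetterInv l := by
  match l with
  | [] | [_] | [_, _] | [_, _, _] | _ :: _ :: _ :: _ :: _ :: _ => rfl
  | [p, q, r, t] => simp [twoLetterInv]

theorem twoLetterInv_move {l l' : List Letter} (h : Move l l') (hl : IsSignedWord l)
    (hlen : l.length = 4) : twoLetterInv l = twoLetterInv l' := by
  obtain ⟨a, s, x, y, rfl, rfl⟩ := h
  obtain ⟨b, t, hba, hxy⟩ := hl.exists_append_eq_pair (by simp at hlen; omega)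
  rcases List.append_eq_pair hxy with ⟨rfl, rfl⟩ | ⟨rfl, rfl⟩ | ⟨rfl, rfl⟩ <;>
    cases s <;> simp [twoLetterInv, hba, hba.symm, add_comm]

theorem twoLetterInv_eq_of_cyclicEquivL {l l' : List Letter} (h : CyclicEquivL l l')
    (hl : IsSignedWord l) (hlen : l.length = 4) : twoLetterInv l = twoLetterInv l' := by
  refine Relation.EqvGen.apply_eq_of_invariant (P := fun l => IsSignedWord l ∧ l.length = 4)
    ?_ ?_ h ⟨hl, hlen⟩
  · rintro l l' (⟨f, rfl⟩ | hm)
    · simp [isSignedWord_relabel_iff]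
    · rw [isSignedWord_iff_of_move hm, length_eq_of_move hm]
  · rintro l l' (⟨f, rfl⟩ | hm) ⟨hl, hlen⟩
    · exact (twoLetterInv_relabel f l).symm
    · exact twoLetterInv_move hm hl hlen

theorem CyclicEquivL.patternAABB_swap (a b : ℕ) (s t : Bool) :
    CyclicEquivL (patternAABB a b s t) (patternAABB b a s t) := by
  simpa [patternAABB] using CyclicEquivL.relabel (Equiv.swap a b) (patternAABB a b s t)

theorem CyclicEquivL.patternABAB_swap (a b : ℕ) (s t : Bool) :
    CyclicEquivL (patternABAB a b s t) (patternABAB b a s t) := by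
  simpa [patternABAB] using CyclicEquivL.relabel (Equiv.swap a b) (patternABAB a b s t)

theorem CyclicEquivL.patternAABB_ABBA (a b : ℕ) (s t : Bool) :
    CyclicEquivL (patternAABB a b s t) (patternABBA a b (!s) t) :=
  CyclicEquivL.move a s [] [(b, t), (b, t)]

theorem CyclicEquivL.patternABBA_AABB (a b : ℕ) (s t : Bool) :
    CyclicEquivL (patternABBA a b s t) (patternAABB a b t (!s)) :=
  (CyclicEquivL.move a s [(b, t), (b, t)] []).trans (patternAABB_swap b a t (!s))

theorem CyclicEquivL.patternABAB_rotate (a b : ℕ) (s t : Bool) :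
    CyclicEquivL (patternABAB a b s t) (patternABAB a b t (!s)) :=
  (CyclicEquivL.move a s [(b, t)] [(b, t)]).trans (patternABAB_swap b a t (!s))

theorem exists_equiv_apply_eq_zero_one {a b : ℕ} (hba : b ≠ a) :
    ∃ f : ℕ ≃ ℕ, f a = 0 ∧ f b = 1 := by
  have hb : Equiv.swap a 0 b ≠ 0 := fun h => hba (by simpa using congrArg (Equiv.swap a 0) h)
  exact ⟨(Equiv.swap a 0).trans (Equiv.swap (Equiv.swap a 0 b) 1),
    by simp [Equiv.swap_apply_of_ne_of_ne hb.symm zero_ne_one], by simp⟩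

theorem CyclicEquivL.patternAABB_cases {a b : ℕ} (hba : b ≠ a) (s t : Bool) :
    CyclicEquivL (patternAABB a b s t) wordAABB.1 ∨
      CyclicEquivL (patternAABB a b s t) wordAABnBn.1 ∨
      CyclicEquivL (patternAABB a b s t) wordABnBnA.1 := by
  obtain ⟨f, hfa, hfb⟩ := exists_equiv_apply_eq_zero_one hba
  have hf : CyclicEquivL (patternAABB a b s t) (patternAABB 0 1 s t) := by
    simpa [patternAABB, hfa, hfb] using relabel f (patternAABB a b s t)
  cases s <;> cases t
  · exact Or.inr (Or.inr (hf.trans (patternAABB_ABBA 0 1 false false)))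
  · exact Or.inr (Or.inl
      ((hf.trans (patternAABB_ABBA 0 1 false true)).trans (patternABBA_AABB 0 1 true true)))
  · exact Or.inr (Or.inl hf)
  · exact Or.inl hf

theorem CyclicEquivL.patternABAB_wordABAB {a b : ℕ} (hba : b ≠ a) (s t : Bool) :
    CyclicEquivL (patternABAB a b s t) wordABAB.1 := by
  obtain ⟨f, hfa, hfb⟩ := exists_equiv_apply_eq_zero_one hba
  have hf : CyclicEquivL (patternABAB a b s t) (patternABAB 0 1 s t) := by
    simpa [patternABAB, hfa, hfb] using relabel f (patternABAB a b s t)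
  have rot := patternABAB_rotate 0 1
  cases s <;> cases t
  · exact hf.trans ((rot _ _).trans (rot _ _))
  · exact hf.trans (rot _ _)
  · exact hf.trans ((rot _ _).trans ((rot _ _).trans (rot _ _)))
  · exact hf

theorem IsSignedWord.cyclicEquivL_wordAA {l : List Letter} (h : IsSignedWord l)
    (hl : l.length = 2) : CyclicEquivL l wordAA.1 := by
  obtain ⟨⟨a, s⟩, rfl⟩ := h.exists_eq_pair hl
  have h0 : CyclicEquivL [(a, s), (a, s)] [(0, s), (0, s)] := by
    simpa using CyclicEquivL.relabel (Equiv.swap a 0) [(a, s), (a, s)]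
  cases s
  · exact h0.trans (CyclicEquivL.move 0 false [] [])
  · exact h0

theorem IsSignedWord.cyclicEquivL_of_length_eq_four {l : List Letter} (h : IsSignedWord l)
    (hl : l.length = 4) :
    CyclicEquivL l wordAABB.1 ∨ CyclicEquivL l wordAABnBn.1 ∨ CyclicEquivL l wordABnBnA.1 ∨
      CyclicEquivL l wordABAB.1 := by
  obtain ⟨a, b, s, t, hba, rfl | rfl | rfl⟩ := h.eq_pattern hl
  · rcases CyclicEquivL.patternAABB_cases hba s t with h' | h' | h' <;> simp [h']
  · simp [CyclicEquivL.patternABAB_wordABAB hba s t]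
  · have hAABB := CyclicEquivL.patternABBA_AABB a b s t
    rcases CyclicEquivL.patternAABB_cases hba t (!s) with h' | h' | h' <;> simp [hAABB.trans h']

def smallWords : Fin 6 → SignedWord :=
  ![wordEmpty, wordAA, wordAABB, wordAABnBn, wordABnBnA, wordABAB]

theorem smallWords_numLetters_le (i : Fin 6) : (smallWords i).numLetters ≤ 2 := by
  revert i
  decide

theorem Ncount_smallWords_eq_zero_of_lt {i j : Fin 6} (hji : j < i) :
    Ncount (smallWords i) (smallWords j) = 0 := by
  -- `twoLetterInv` takes the values `2, 1, 0, 5` on the four two-letter words.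
  have key : ∀ i j : Fin 6, j < i →
      (smallWords j).numLetters < (smallWords i).numLetters ∨
        (smallWords j).numLetters = (smallWords i).numLetters ∧ (smallWords j).1.length = 4 ∧
          twoLetterInv (smallWords j).1 ≠ twoLetterInv (smallWords i).1 := by
    decide
  rcases key i j hji with hlt | ⟨heq, hlen, hinv⟩
  · exact Ncount_eq_zero_of_numLetters_lt hlt
  · rw [Ncount_of_numLetters_eq heq]
    exact if_neg fun h => hinv (twoLetterInv_eq_of_cyclicEquivL h (smallWords j).2 hlen)

theorem SignedWord.exists_cyclicEquiv_smallWords (w : SignedWord) (hw : w.numLetters ≤ 2) :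
    ∃ i, w.CyclicEquiv (smallWords i) := by
  have hlen : w.1.length = 2 * w.numLetters := w.2.length_eq
  interval_cases w.numLetters
  · refine ⟨0, ?_⟩
    show CyclicEquivL w.1 []
    rw [List.eq_nil_of_length_eq_zero hlen]
    exact CyclicEquivL.refl _
  · exact ⟨1, w.2.cyclicEquivL_wordAA hlen⟩
  · rcases w.2.cyclicEquivL_of_length_eq_four hlen with h | h | h | h
    exacts [⟨2, h⟩, ⟨3, h⟩, ⟨4, h⟩, ⟨5, h⟩]

theorem eq_zero_of_apply_smallWords_eq_zero {F : Type*} [Field F] {v : SignedWord → F}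
    (hv : v ∈ Vn F 2) (h : ∀ i, v (smallWords i) = 0) : v = 0 := by
  funext w
  refine eq_zero_of_forall_numLetters_le hv (fun w hw => ?_) w
  obtain ⟨i, hi⟩ := w.exists_cyclicEquiv_smallWords hw
  rw [hv.1 w _ hi, h i]

theorem linearIndependent_Ncount_smallWords (F : Type*) [Field F] :
    LinearIndependent F fun i w => (Ncount (smallWords i) w : F) := by
  let M : Matrix (Fin 6) (Fin 6) F := fun i j => Ncount (smallWords i) (smallWords j)
  have hM : M.IsUpperTriangular := fun i j (hji : j < i) => by
    simp only [M, Ncount_smallWords_eq_zero_of_lt hji, Nat.cast_zero]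
  have hdet : M.det = 1 := by
    simp [Matrix.det_of_isUpperTriangular hM, M, Ncount_self]
  exact LinearIndependent.of_comp (LinearMap.pi fun j => LinearMap.proj (smallWords j))
    (Matrix.linearIndependent_rows_of_det_ne_zero (hdet ▸ one_ne_zero))

theorem V2_dim_eq_six_general (F : Type*) [Field F] :
    Module.finrank F (Vn F 2) = 6 := by
  let ev : Vn F 2 →ₗ[F] Fin 6 → F :=
    (LinearMap.pi fun i => LinearMap.proj (smallWords i)) ∘ₗ (Vn F 2).subtype
  have hev : Function.Injective ev := by
    refine (injective_iff_map_eq_zero ev).2 fun v hv => Subtype.ext ?_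
    exact eq_zero_of_apply_smallWords_eq_zero v.2 (congrFun hv)
  have : Module.Finite F (Vn F 2) := Module.Finite.of_injective ev hev
  refine le_antisymm (by simpa using ev.finrank_le_finrank_of_injective hev) ?_
  have hli : LinearIndependent F fun i =>
      (⟨_, Ncount_mem_Vn F (smallWords_numLetters_le i)⟩ : Vn F 2) :=
    LinearIndependent.of_comp (Vn F 2).subtype (linearIndependent_Ncount_smallWords F)
  simpa using hli.fintype_card_le_finrank

/-- `dim V₂ = 6`. -/
theorem V2_dim_eq_six (F : Type*) [Field F] [CharZero F] :
    Module.finrank F (Vn F 2) = 6 :=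
  V2_dim_eq_six_general F
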